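/- Let $K$ be a field and $n \ge 2$. Let $T'$ be a stable (at-least-trivalent) tree whose leaves are bijectively labeled by $\{a, b, c, 1, \ldots, n-1\}$, and let $(x^{(1)}, \ldots, x^{(n-1)})$ be a coordinate family compatible with $T'$. Let $y : L_n \to K$ (where $L_n = \{b, c, 1, \ldots, n-1\}$) be not identically zero, and suppose the Monin–Rana equations between each $x^{(i)}$ and $y$ hold: for all $i \in \{1,\ldots,n-1\}$ and all $j, k \in L_i$, $x^{(i)}_j (y_j - y_i) y_k = x^{(i)}_k (y_k - y_i) y_j$. Let $\beta \in K$ be nonzero with $\beta = y_\ell$ for some $\ell \in L_n$. Color the labels by: $\chi(a) = R$; for $\ell \in L_n$, $\chi(\ell) = G$ if $y_\ell = \beta$ and $\chi(\ell) = R$ if $y_\ell \ne \beta$. Then this coloring of $T'$ has the strong separation property (no $R$-type and no $G$-type bad configuration). -/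
import Mathlib


/-- `w` lies on the (unique, since we work in trees) path from `u` to `v` in `G`. -/
def OnPath {V : Type*} (G : SimpleGraph V) (u v w : V) : Prop :=
  ∃ p : G.Walk u v, p.IsPath ∧ w ∈ p.support

/-- The degree of a vertex, as the cardinality of its neighbor set. -/
noncomputable def Ndeg {V : Type*} (G : SimpleGraph V) (v : V) : ℕ :=
  (G.neighborSet v).ncard

/-- A stable (at-least-trivalent) tree: a tree with no vertex of degree 2
and at least one vertex of degree ≥ 3. -/
def IsStableTree {V : Type*} (G : SimpleGraph V) : Prop :=
  G.IsTree ∧ (∀ v, Ndeg G v ≠ 2) ∧ (∃ v, 3 ≤ Ndeg G v)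

/-- `lf` is a bijective labeling of the leaves of `G` by the label set
`{a, b, c, 1, …, m}`, encoded as `{0, 1, …, m+2}` via
`a ↔ 0`, `b ↔ 1`, `c ↔ 2`, numeric label `ℓ ↔ ℓ+2`. -/
def IsLeafLabeling {V : Type*} (G : SimpleGraph V) (m : ℕ) (lf : ℕ → V) : Prop :=
  (∀ s t, s < m + 3 → t < m + 3 → lf s = lf t → s = t) ∧
  (∀ v, Ndeg G v = 1 ↔ ∃ s, s < m + 3 ∧ lf s = v)

/-- The vertex set of the minimal subtree `S_i` of `G` spanning the leaves
labeled by `{a, b, c, 1, …, i}` (label indices `< i+3`): the union of all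
paths between these leaves. -/
def SpanSet {V : Type*} (G : SimpleGraph V) (lf : ℕ → V) (i : ℕ) : Set V :=
  {v | ∃ j k, j < i + 3 ∧ k < i + 3 ∧ OnPath G (lf j) (lf k) v}

/-- Degree of `v` within the subtree with vertex set `s`: the number of
neighbors of `v` lying in `s`. -/
noncomputable def DegIn {V : Type*} (G : SimpleGraph V) (s : Set V) (v : V) : ℕ :=
  (G.neighborSet v ∩ s).ncard

/-- `w` is the vertex `v_i`: the vertex of degree ≥ 3 in `S_i` nearest to the
leaf labeled by the numeric label `i` (label index `i+2`): every vertex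
strictly between that leaf and `w` on the path has degree ≤ 2 in `S_i`. -/
def IsBranchVertexAt {V : Type*} (G : SimpleGraph V) (lf : ℕ → V) (i : ℕ) (w : V) : Prop :=
  w ∈ SpanSet G lf i ∧ 3 ≤ DegIn G (SpanSet G lf i) w ∧
  ∀ u, OnPath G (lf (i + 2)) w u → u ≠ lf (i + 2) → u ≠ w →
    DegIn G (SpanSet G lf i) u ≤ 2

/-- "`i` separates `j` and `k` at level `i`": the vertex `v_i` lies on the
path between the leaves with label indices `j` and `k`. -/
def SeparatesAt {V : Type*} (G : SimpleGraph V) (lf : ℕ → V) (i j k : ℕ) : Prop :=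
  ∃ w, IsBranchVertexAt G lf i w ∧ OnPath G (lf j) (lf k) w

/-- An `R`-type bad configuration for the green/red coloring `χ`
(`χ s` means label index `s` is colored `G`reen): indices `i ∈ {1,…,m}` and
distinct `j, k ∈ L_i` (label indices in `[1, i+1]`) with `j, k` green, the
numeric label `i` (label index `i+2`) red, and `i` separating `j`, `k`. -/
def RBad {V : Type*} (G : SimpleGraph V) (lf : ℕ → V) (m : ℕ) (χ : ℕ → Prop) : Prop :=
  ∃ i j k, 1 ≤ i ∧ i ≤ m ∧ 1 ≤ j ∧ j ≤ i + 1 ∧ 1 ≤ k ∧ k ≤ i + 1 ∧ j ≠ k ∧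
    χ j ∧ χ k ∧ ¬ χ (i + 2) ∧ SeparatesAt G lf i j k

/-- A `G`-type bad configuration: `i` and `k` green, `j` red, and `i`
separating `a` (label index `0`) and `j`. -/
def GBad {V : Type*} (G : SimpleGraph V) (lf : ℕ → V) (m : ℕ) (χ : ℕ → Prop) : Prop :=
  ∃ i j k, 1 ≤ i ∧ i ≤ m ∧ 1 ≤ j ∧ j ≤ i + 1 ∧ 1 ≤ k ∧ k ≤ i + 1 ∧ j ≠ k ∧
    χ (i + 2) ∧ χ k ∧ ¬ χ j ∧ SeparatesAt G lf i 0 j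

/-- The strong separation property: no bad configuration of either type. -/
def StrongSep {V : Type*} (G : SimpleGraph V) (lf : ℕ → V) (m : ℕ) (χ : ℕ → Prop) : Prop :=
  ¬ RBad G lf m χ ∧ ¬ GBad G lf m χ

/-- A coordinate family `x` is compatible with the stable tree `G` (with leaf
labeling `lf` by `{a,b,c,1,…,m}`): `x^{(i)}_j = 0` iff `i` does not separate
`a` and `j` at level `i`, and `x^{(i)}_j = x^{(i)}_k` iff `i` does not
separate `j` and `k` at level `i`.  (Here `j : Fin (i+1)` has tree label
index `j+1`.) -/
def Compatible {V : Type*} (G : SimpleGraph V) (lf : ℕ → V) {K : Type*} [Field K]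
    (m : ℕ) (x : (i : ℕ) → Fin (i + 1) → K) : Prop :=
  ∀ i, 1 ≤ i → i ≤ m → ∀ j k : Fin (i + 1),
    (x i j = 0 ↔ ¬ SeparatesAt G lf i 0 ((j : ℕ) + 1)) ∧
    (x i j = x i k ↔ ¬ SeparatesAt G lf i ((j : ℕ) + 1) ((k : ℕ) + 1))

/-- (Lemma 3.6 of the paper.)  Let `T'` be a stable tree
labeled by `{a, b, c, 1, …, n-1}` with a compatible coordinate family
`(x^{(1)}, …, x^{(n-1)})`, and let `y : L_n → K` be a not-identically-zero
vector satisfying the Monin–Rana equations against each `x^{(i)}`.  For any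
nonzero value `β` attained by `y`, coloring the labels `ℓ` with `y_ℓ = β`
green and `a` and all other labels red yields a coloring with the strong
separation property. -/
theorem beta_coloring_strong_separation {V : Type*} [Fintype V] {K : Type*} [Field K]
    (n : ℕ) (hn : 2 ≤ n)
    (G : SimpleGraph V) (hT : IsStableTree G)
    (lf : ℕ → V) (hlf : IsLeafLabeling G (n - 1) lf)
    (x : (i : ℕ) → Fin (i + 1) → K)
    (hxne : ∀ i, 1 ≤ i → i ≤ n - 1 → ∃ j, x i j ≠ 0)
    (hcomp : Compatible G lf (n - 1) x)
    (y : Fin (n + 1) → K) (hy : ∃ t, y t ≠ 0)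
    (hMR : ∀ i, 1 ≤ i → ∀ _hi : i ≤ n - 1, ∀ j k : Fin (i + 1),
      x i j * (y (Fin.castLE (by omega) j) - y ⟨i + 1, by omega⟩)
          * y (Fin.castLE (by omega) k)
        = x i k * (y (Fin.castLE (by omega) k) - y ⟨i + 1, by omega⟩)
          * y (Fin.castLE (by omega) j))
    (β : K) (hβ : β ≠ 0) (hβy : ∃ t : Fin (n + 1), y t = β) :
    StrongSep G lf (n - 1) (fun s => ∃ t : Fin (n + 1), (t : ℕ) + 1 = s ∧ y t = β) := by
  constructor
  · rintro ⟨i, j, k, hi1, hi2, hj1, hj2, hk1, hk2, hjk, ⟨tj, htj, hyj⟩,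
      ⟨tk, htk, hyk⟩, hχi, hsep⟩
    have hin : i + 1 < n + 1 := by omega
    set j' : Fin (i + 1) := ⟨j - 1, by omega⟩ with hj'
    set k' : Fin (i + 1) := ⟨k - 1, by omega⟩ with hk'
    have e1 : ∀ h : i + 1 ≤ n + 1, y (Fin.castLE h j') = β := by
      intro h
      have : Fin.castLE h j' = tj := Fin.ext (by simp [hj']; omega)
      rw [this]; exact hyj
    have e2 : ∀ h : i + 1 ≤ n + 1, y (Fin.castLE h k') = β := by
      intro h
      have : Fin.castLE h k' = tk := Fin.ext (by simp [hk']; omega)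
      rw [this]; exact hyk
    have e3 : ∀ h : i + 1 < n + 1, y (⟨i + 1, h⟩ : Fin (n + 1)) = y ⟨i + 1, hin⟩ :=
      fun _ => rfl
    have hyi : y ⟨i + 1, hin⟩ ≠ β := by
      intro h
      exact hχi ⟨⟨i + 1, hin⟩, by simp, h⟩
    have h := hMR i hi1 hi2 j' k'
    simp only [e1, e2, e3] at h
    have hsub : β - y ⟨i + 1, hin⟩ ≠ 0 := sub_ne_zero.mpr (Ne.symm hyi)
    have hxeq : x i j' = x i k' :=
      mul_right_cancel₀ hsub (mul_right_cancel₀ hβ h)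
    have hjj : (j' : ℕ) + 1 = j := by simp [hj']; omega
    have hkk : (k' : ℕ) + 1 = k := by simp [hk']; omega
    exact (hcomp i hi1 hi2 j' k').2.mp hxeq (by rw [hjj, hkk]; exact hsep)
  · rintro ⟨i, j, k, hi1, hi2, hj1, hj2, hk1, hk2, hjk, ⟨ti, hti, hyi⟩,
      ⟨tk, htk, hyk⟩, hχj, hsep⟩
    have hjn : j - 1 < n + 1 := by omega
    set j' : Fin (i + 1) := ⟨j - 1, by omega⟩ with hj'
    set k' : Fin (i + 1) := ⟨k - 1, by omega⟩ with hk'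
    have e1 : ∀ h : i + 1 ≤ n + 1, y (Fin.castLE h j') = y ⟨j - 1, hjn⟩ :=
      fun _ => rfl
    have e2 : ∀ h : i + 1 ≤ n + 1, y (Fin.castLE h k') = β := by
      intro h
      have : Fin.castLE h k' = tk := Fin.ext (by simp [hk']; omega)
      rw [this]; exact hyk
    have e3 : ∀ h : i + 1 < n + 1, y (⟨i + 1, h⟩ : Fin (n + 1)) = β := by
      intro h
      have : (⟨i + 1, h⟩ : Fin (n + 1)) = ti := Fin.ext (by simp; omega)
      rw [this]; exact hyi
    have hyj : y ⟨j - 1, hjn⟩ ≠ β := by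
      intro h
      exact hχj ⟨⟨j - 1, hjn⟩, by simp; omega, h⟩
    have hjj : (j' : ℕ) + 1 = j := by simp [hj']; omega
    have hxj : x i j' ≠ 0 := by
      intro h0
      exact (hcomp i hi1 hi2 j' k').1.mp h0 (by rw [hjj]; exact hsep)
    have h := hMR i hi1 hi2 j' k'
    simp only [e1, e2, e3, sub_self, mul_zero, zero_mul] at h
    exact (mul_ne_zero (mul_ne_zero hxj (sub_ne_zero.mpr hyj)) hβ) h
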